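/- Let κ : S² × S² → ℝ be measurable with κ(Ω,Ω') = κ(Ω',Ω), κ(Ω,Ω') ≥ κ₀ for a constant κ₀ > 0, and ∫_{S²} κ(Ω,Ω') dσ(Ω') = 1 for every Ω ∈ S². Let b₁, …, b_m : S² → ℝ be bounded measurable functions that are orthonormal in L²(S², σ) (∫ b_i b_j dσ = δ_{ij}) and satisfy ∫_{S²} b_i dσ = 0 for each i. Define the matrix Σ ∈ ℝ^{m×m} by Σ_{ij} = ∫_{S²}∫_{S²} b_i(Ω) b_j(Ω') κ(Ω,Ω') dσ(Ω') dσ(Ω). Let σ_s ≥ 0 and σ_a ≥ 0 with σ_t := σ_s + σ_a > 0. Then for every c ∈ ℝ^m, cᵀ(σ_s Σ − σ_t I_m) c ≤ −(σ_a + 4π σ_s κ₀) ‖c‖²; in particular the matrix σ_s Σ − σ_t I_m is negative definite and hence invertible. -/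

import Mathlib

open MeasureTheory Metric
open scoped RealInnerProductSpace Real Matrix

noncomputable section

/-- Euclidean space `ℝ³`. -/
abbrev E3 : Type := EuclideanSpace ℝ (Fin 3)

/-- The unit sphere `S² ⊆ ℝ³`. -/
abbrev S2 : Type := Metric.sphere (0 : E3) 1

/-- The rotation-invariant surface measure `σ` on `S²` (total mass `4π`). -/
noncomputable def σS : Measure S2 := (volume : Measure E3).toSphere

/-!
Put `f = ∑ cᵢ bᵢ`. Orthonormality gives `∫ f² = ‖c‖²`, and `cᵀ Σ c = ∬ f(Ω) f(Ω') κ(Ω, Ω')`.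
Split `κ = κ₀ + (κ - κ₀)`: the constant part contributes `κ₀ (∫ f)² = 0`, and `κ - κ₀` is a
nonnegative symmetric kernel with row integrals `1 - 4πκ₀`, so integrating
`f(Ω) f(Ω') ≤ (f(Ω)² + f(Ω')²) / 2` against it (Schur's test) bounds its contribution by
`(1 - 4πκ₀) ∫ f²`. Thus `cᵀ Σ c ≤ (1 - 4πκ₀) ‖c‖²`, which with `σ_s ≥ 0` gives the bound;
a matrix with negative definite quadratic form has trivial kernel, hence is invertible.
-/

open Function

instance : IsFiniteMeasure σS := by unfold σS; infer_instance

lemma σS_real_univ : σS.real Set.univ = 4 * π := by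
  rw [measureReal_def, σS, Measure.toSphere_apply_univ, EuclideanSpace.volume_ball_fin_three]
  simp only [finrank_euclideanSpace, Fintype.card_fin, Nat.cast_ofNat, ENNReal.ofReal_one,
    one_pow, one_mul, ENNReal.toReal_mul, ENNReal.toReal_ofNat,
    ENNReal.toReal_ofReal (by positivity : 0 ≤ π * 4 / 3)]
  ring

lemma abs_mul_le_of_abs_le {a b A B : ℝ} (ha : |a| ≤ A) (hb : |b| ≤ B) : |a * b| ≤ A * B := by
  rw [abs_mul]; exact mul_le_mul ha hb (abs_nonneg _) ((abs_nonneg _).trans ha)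

section Kernel

variable {α : Type*} [MeasurableSpace α] {μ : Measure α} {k : α → α → ℝ}

lemma integrable_uncurry_of_integral_eq [IsFiniteMeasure μ] (hk : Measurable (uncurry k))
    (hk0 : ∀ x y, 0 ≤ k x y) (hint : ∀ x, Integrable (k x) μ) {r : ℝ}
    (hrow : ∀ x, ∫ y, k x y ∂μ = r) : Integrable (uncurry k) (μ.prod μ) := by
  refine (integrable_prod_iff hk.aestronglyMeasurable).2 ⟨.of_forall hint, ?_⟩
  simp_rw [uncurry_apply_pair, Real.norm_of_nonneg (hk0 _ _), hrow]
  exact integrable_const r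

lemma MeasureTheory.Integrable.bdd_mul_kernel (hk : Integrable (uncurry k) (μ.prod μ))
    {g : α × α → ℝ} {C : ℝ} (hg : Measurable g) (hC : ∀ p, |g p| ≤ C) :
    Integrable (fun p => g p * k p.1 p.2) (μ.prod μ) :=
  hk.bdd_mul hg.aestronglyMeasurable (.of_forall hC)

lemma integral_mul_mul_kernel_le [SFinite μ] (hk : Integrable (uncurry k) (μ.prod μ))
    (hk_symm : ∀ x y, k x y = k y x) (hk0 : ∀ x y, 0 ≤ k x y) {r : ℝ}
    (hrow : ∀ x, ∫ y, k x y ∂μ = r) {f : α → ℝ} {C : ℝ} (hf : Measurable f)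
    (hC : ∀ x, |f x| ≤ C) :
    ∫ p : α × α, f p.1 * f p.2 * k p.1 p.2 ∂(μ.prod μ) ≤ r * ∫ x, f x ^ 2 ∂μ := by
  have hC2 : ∀ x, |f x ^ 2| ≤ C * C := fun x => by
    rw [sq]; exact abs_mul_le_of_abs_le (hC x) (hC x)
  have hff : Integrable (fun p : α × α => f p.1 * f p.2 * k p.1 p.2) (μ.prod μ) :=
    hk.bdd_mul_kernel (by fun_prop) fun p => abs_mul_le_of_abs_le (hC p.1) (hC p.2)
  have hleft : Integrable (fun p : α × α => f p.1 ^ 2 * k p.1 p.2) (μ.prod μ) :=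
    hk.bdd_mul_kernel (by fun_prop) fun p => hC2 p.1
  have hright : Integrable (fun p : α × α => f p.2 ^ 2 * k p.1 p.2) (μ.prod μ) :=
    hk.bdd_mul_kernel (by fun_prop) fun p => hC2 p.2
  have hswap : ∫ p : α × α, f p.2 ^ 2 * k p.1 p.2 ∂(μ.prod μ)
      = ∫ p : α × α, f p.1 ^ 2 * k p.1 p.2 ∂(μ.prod μ) := by
    rw [← integral_prod_swap]
    simp only [Prod.fst_swap, Prod.snd_swap, hk_symm]
  calc ∫ p : α × α, f p.1 * f p.2 * k p.1 p.2 ∂(μ.prod μ)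
      ≤ ∫ p : α × α, (f p.1 ^ 2 * k p.1 p.2 + f p.2 ^ 2 * k p.1 p.2) / 2 ∂(μ.prod μ) := by
        refine integral_mono hff ((hleft.add hright).div_const 2) fun p => ?_
        nlinarith [mul_nonneg (sq_nonneg (f p.1 - f p.2)) (hk0 p.1 p.2)]
    _ = ∫ x, ∫ y, f x ^ 2 * k x y ∂μ ∂μ := by
        rw [integral_div, integral_add hleft hright, hswap, integral_prod _ hleft]
        ring
    _ = r * ∫ x, f x ^ 2 ∂μ := by
        simp only [integral_const_mul, hrow, integral_mul_const, mul_comm r]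

lemma integral_mul_mul_kernel_le_of_le [IsFiniteMeasure μ] (hk : Measurable (uncurry k))
    (hk_symm : ∀ x y, k x y = k y x) {k₀ : ℝ} (hk₀ : ∀ x y, k₀ ≤ k x y)
    (hint : ∀ x, Integrable (k x) μ) {r : ℝ} (hrow : ∀ x, ∫ y, k x y ∂μ = r)
    {f : α → ℝ} {C : ℝ} (hf : Measurable f) (hC : ∀ x, |f x| ≤ C) (hf0 : ∫ x, f x ∂μ = 0) :
    ∫ p : α × α, f p.1 * f p.2 * k p.1 p.2 ∂(μ.prod μ)
      ≤ (r - k₀ * μ.real Set.univ) * ∫ x, f x ^ 2 ∂μ := by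
  set l : α → α → ℝ := fun x y => k x y - k₀
  have hl0 : ∀ x y, 0 ≤ l x y := fun x y => sub_nonneg.2 (hk₀ x y)
  have hl_row : ∀ x, ∫ y, l x y ∂μ = r - k₀ * μ.real Set.univ := fun x => by
    rw [integral_sub (hint x) (integrable_const k₀), hrow, integral_const, smul_eq_mul, mul_comm]
  have hl : Integrable (uncurry l) (μ.prod μ) :=
    integrable_uncurry_of_integral_eq (hk.sub measurable_const) hl0
      (fun x => (hint x).sub (integrable_const k₀)) hl_row
  have hf_int : Integrable f μ := .of_bound hf.aestronglyMeasurable C (.of_forall hC)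
  have hsplit : ∫ p : α × α, f p.1 * f p.2 * k p.1 p.2 ∂(μ.prod μ)
      = ∫ p : α × α, f p.1 * f p.2 * l p.1 p.2 ∂(μ.prod μ) + k₀ * (∫ x, f x ∂μ) ^ 2 := by
    rw [sq, ← integral_prod_mul, ← integral_const_mul, ← integral_add
      (hl.bdd_mul_kernel (by fun_prop) fun p => abs_mul_le_of_abs_le (hC p.1) (hC p.2))
      ((hf_int.mul_prod hf_int).const_mul k₀)]
    congr 1 with p
    ring
  rw [hsplit, hf0]
  simpa using
    integral_mul_mul_kernel_le hl (fun x y => by simp only [l, hk_symm]) hl0 hl_row hf hC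

end Kernel

lemma dotProduct_mulVec_eq_integral {ι β : Type*} [Fintype ι] [MeasurableSpace β]
    {ν : Measure β} {A : Matrix ι ι ℝ} {u v : ι → β → ℝ} {w : β → ℝ}
    (hint : ∀ i j, Integrable (fun x => u i x * v j x * w x) ν)
    (hA : ∀ i j, A i j = ∫ x, u i x * v j x * w x ∂ν) (c : ι → ℝ) :
    c ⬝ᵥ (A *ᵥ c) = ∫ x, (∑ i, c i * u i x) * (∑ j, c j * v j x) * w x ∂ν := by
  have hexp : ∀ x, (∑ i, c i * u i x) * (∑ j, c j * v j x) * w x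
      = ∑ i, ∑ j, c i * c j * (u i x * v j x * w x) := fun x => by
    rw [Finset.sum_mul_sum, Finset.sum_mul]
    refine Finset.sum_congr rfl fun i _ => ?_
    rw [Finset.sum_mul]
    exact Finset.sum_congr rfl fun j _ => by ring
  simp_rw [hexp]
  rw [integral_finsetSum _ fun i _ => integrable_finsetSum _ fun j _ => (hint i j).const_mul _]
  refine Finset.sum_congr rfl fun i _ => ?_
  rw [integral_finsetSum _ fun j _ => (hint i j).const_mul _, Matrix.mulVec, dotProduct,
    Finset.mul_sum]
  refine Finset.sum_congr rfl fun j _ => ?_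
  rw [integral_const_mul, hA]
  ring

lemma Matrix.isUnit_of_dotProduct_mulVec_le {ι : Type*} [Fintype ι] [DecidableEq ι]
    {A : Matrix ι ι ℝ} {ε : ℝ} (hε : 0 < ε) (hA : ∀ c, c ⬝ᵥ (A *ᵥ c) ≤ -ε * ∑ i, c i ^ 2) :
    IsUnit A := by
  rw [Matrix.isUnit_iff_isUnit_det, isUnit_iff_ne_zero]
  intro hdet
  obtain ⟨v, hv0, hv⟩ := Matrix.exists_mulVec_eq_zero_iff.2 hdet
  have hpos : 0 < ∑ i, v i ^ 2 := by
    obtain ⟨i, hi⟩ := Function.ne_iff.1 hv0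
    exact Finset.sum_pos' (fun j _ => sq_nonneg _)
      ⟨i, Finset.mem_univ i, pow_two_pos_of_ne_zero hi⟩
  have := hA v
  rw [hv, dotProduct_zero] at this
  nlinarith

section KernelMatrix

variable {α ι : Type*} [MeasurableSpace α] [Fintype ι]

def kernelMatrix (μ : Measure α) (k : α → α → ℝ) (b : ι → α → ℝ) : Matrix ι ι ℝ :=
  Matrix.of fun i j => ∫ x, ∫ y, b i x * b j y * k x y ∂μ ∂μ

lemma dotProduct_kernelMatrix_mulVec_le [DecidableEq ι] {μ : Measure α} [IsFiniteMeasure μ]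
    {k : α → α → ℝ} (hk : Measurable (uncurry k)) (hk_symm : ∀ x y, k x y = k y x)
    {k₀ : ℝ} (hk₀ : 0 ≤ k₀) (hk₀_le : ∀ x y, k₀ ≤ k x y) (hint : ∀ x, Integrable (k x) μ) {r : ℝ}
    (hrow : ∀ x, ∫ y, k x y ∂μ = r) {b : ι → α → ℝ} (hb : ∀ i, Measurable (b i))
    {C : ι → ℝ} (hC : ∀ i x, |b i x| ≤ C i)
    (hortho : ∀ i j, ∫ x, b i x * b j x ∂μ = if i = j then (1 : ℝ) else 0)
    (hmean : ∀ i, ∫ x, b i x ∂μ = 0) (c : ι → ℝ) :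
    c ⬝ᵥ (kernelMatrix μ k b *ᵥ c) ≤ (r - k₀ * μ.real Set.univ) * ∑ i, c i ^ 2 := by
  set f : α → ℝ := fun x => ∑ i, c i * b i x
  have hf : Measurable f := Finset.measurable_sum _ fun i _ => (hb i).const_mul _
  have hfC : ∀ x, |f x| ≤ ∑ i, |c i| * C i := fun x =>
    (Finset.abs_sum_le_sum_abs _ _).trans <| Finset.sum_le_sum fun i _ => by
      rw [abs_mul]; exact mul_le_mul_of_nonneg_left (hC i x) (abs_nonneg _)
  have hb_int : ∀ i, Integrable (b i) μ := fun i =>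
    .of_bound (hb i).aestronglyMeasurable (C i) (.of_forall (hC i))
  have hf0 : ∫ x, f x ∂μ = 0 := by
    simp only [f, integral_finsetSum _ fun i _ => (hb_int i).const_mul _, integral_const_mul,
      hmean, mul_zero, Finset.sum_const_zero]
  have hf2 : ∑ i, c i ^ 2 = ∫ x, f x ^ 2 ∂μ := by
    have h := dotProduct_mulVec_eq_integral (A := 1) (w := fun _ => 1) (u := b) (v := b)
      (fun i j => by
        simpa using (hb_int j).bdd_mul (hb i).aestronglyMeasurable (.of_forall (hC i)))
      (by simp [Matrix.one_apply, hortho]) c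
    simpa [sq, dotProduct] using h
  have hk_prod : Integrable (uncurry k) (μ.prod μ) :=
    integrable_uncurry_of_integral_eq hk (fun x y => hk₀.trans (hk₀_le x y)) hint hrow
  have hbbk : ∀ i j, Integrable (fun p : α × α => b i p.1 * b j p.2 * k p.1 p.2) (μ.prod μ) :=
    fun i j => hk_prod.bdd_mul_kernel (by fun_prop) fun p =>
      abs_mul_le_of_abs_le (hC i p.1) (hC j p.2)
  rw [dotProduct_mulVec_eq_integral hbbk
    (fun i j => by rw [kernelMatrix, Matrix.of_apply, integral_prod _ (hbbk i j)]) c, hf2]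
  exact integral_mul_mul_kernel_le_of_le hk hk_symm hk₀_le hint hrow hf hfC hf0

end KernelMatrix

/-- Invertibility of the odd-odd block `C_oo = σ_s Σ_oo − σ_t E`: for a symmetric kernel
`κ ≥ κ₀ > 0` with `∫ κ(Ω,·) dσ = 1`, bounded measurable orthonormal mean-zero functions
`b₁,…,b_m` on `S²`, and `σ_s, σ_a ≥ 0` with `σ_t = σ_s + σ_a > 0`, the matrix
`σ_s Σ − σ_t I` satisfies `cᵀ(σ_s Σ − σ_t I)c ≤ −(σ_a + 4π σ_s κ₀)‖c‖²` for all `c`,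
so it is negative definite and hence invertible. -/
theorem Coo_negDef_invertible {m : ℕ}
    (κ : S2 → S2 → ℝ) (κ₀ : ℝ) (hκmeas : Measurable (Function.uncurry κ))
    (hκsym : ∀ Ω Ω' : S2, κ Ω Ω' = κ Ω' Ω)
    (hκ₀pos : 0 < κ₀) (hκlb : ∀ Ω Ω' : S2, κ₀ ≤ κ Ω Ω')
    (hκnorm : ∀ Ω : S2, ∫ Ω', κ Ω Ω' ∂σS = 1)
    (b : Fin m → S2 → ℝ)
    (hbmeas : ∀ i, Measurable (b i))
    (hbbd : ∀ i, ∃ C : ℝ, ∀ x : S2, |b i x| ≤ C)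
    (hortho : ∀ i j, ∫ x, b i x * b j x ∂σS = if i = j then (1 : ℝ) else 0)
    (hmean : ∀ i, ∫ x, b i x ∂σS = 0)
    (Sig : Matrix (Fin m) (Fin m) ℝ)
    (hSig : ∀ i j, Sig i j = ∫ Ω, (∫ Ω', b i Ω * b j Ω' * κ Ω Ω' ∂σS) ∂σS)
    (σs σa : ℝ) (hσs : 0 ≤ σs) (hσa : 0 ≤ σa) (hσt : 0 < σs + σa) :
    (∀ c : Fin m → ℝ,
        c ⬝ᵥ ((σs • Sig - (σs + σa) • (1 : Matrix (Fin m) (Fin m) ℝ)) *ᵥ c)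
          ≤ -(σa + 4 * π * σs * κ₀) * ∑ i, c i ^ 2)
      ∧ IsUnit (σs • Sig - (σs + σa) • (1 : Matrix (Fin m) (Fin m) ℝ)) := by
  choose Cb hCb using hbbd
  have hSig_eq : Sig = kernelMatrix σS κ b := Matrix.ext hSig
  have hform : ∀ c : Fin m → ℝ, c ⬝ᵥ (Sig *ᵥ c) ≤ (1 - κ₀ * (4 * π)) * ∑ i, c i ^ 2 := by
    intro c
    rw [hSig_eq, ← σS_real_univ]
    exact dotProduct_kernelMatrix_mulVec_le hκmeas hκsym hκ₀pos.le hκlb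
      (fun Ω => .of_integral_ne_zero (by simp [hκnorm])) hκnorm hbmeas hCb hortho hmean c
  have hbound : ∀ c : Fin m → ℝ,
      c ⬝ᵥ ((σs • Sig - (σs + σa) • (1 : Matrix (Fin m) (Fin m) ℝ)) *ᵥ c)
        ≤ -(σa + 4 * π * σs * κ₀) * ∑ i, c i ^ 2 := fun c => by
    have hsq : c ⬝ᵥ c = ∑ i, c i ^ 2 := by simp [dotProduct, sq]
    simp only [Matrix.sub_mulVec, Matrix.smul_mulVec, Matrix.one_mulVec, dotProduct_sub,
      dotProduct_smul, smul_eq_mul, hsq]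
    nlinarith [mul_le_mul_of_nonneg_left (hform c) hσs]
  have hε : 0 < σa + 4 * π * σs * κ₀ := by
    rcases hσa.eq_or_lt with rfl | hσa_pos
    · have : 0 < σs := by linarith
      positivity
    · positivity
  exact ⟨hbound, Matrix.isUnit_of_dotProduct_mulVec_le hε hbound⟩
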